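/- arXiv:2509.14505 — 5 statements merged into one kernel-verified Lean document; each statement's English description precedes it below -/
import Mathlib

section
/- For a real number t > 0, the inequality 1/t^x ≤ 1/x holds for all x ≥ 1 if and only if t ≥ exp(1/e). -/
theorem stmt_1 (t : ℝ) (ht : 0 < t) :
    (∀ x : ℝ, 1 ≤ x → 1 / t ^ x ≤ 1 / x) ↔ Real.exp (1 / Real.exp 1) ≤ t := by
  have he : (0:ℝ) < Real.exp 1 := Real.exp_pos 1
  constructor
  · intro h
    have h1 : 1 ≤ Real.exp 1 := by
      have := Real.add_one_le_exp (1:ℝ); linarith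
    have := h (Real.exp 1) h1
    have hx : Real.exp 1 ≤ t ^ Real.exp 1 := by
      have htpos : 0 < t ^ Real.exp 1 := Real.rpow_pos_of_pos ht _
      rw [div_le_div_iff₀ htpos he] at this
      linarith
    calc Real.exp (1 / Real.exp 1) = Real.exp 1 ^ (1 / Real.exp 1) := by
          rw [← Real.exp_one_rpow (1 / Real.exp 1)]
      _ ≤ (t ^ Real.exp 1) ^ (1 / Real.exp 1) :=
          Real.rpow_le_rpow he.le hx (by positivity)
      _ = t := by
          rw [← Real.rpow_mul ht.le, mul_one_div, div_self he.ne', Real.rpow_one]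
  · intro h x hx
    have hx0 : (0:ℝ) < x := by linarith
    have key : x ≤ t ^ x := by
      calc x = Real.exp 1 * (x / Real.exp 1) := by field_simp
        _ ≤ Real.exp 1 * Real.exp (x / Real.exp 1 - 1) := by
            have := Real.add_one_le_exp (x / Real.exp 1 - 1)
            nlinarith
        _ = Real.exp (x / Real.exp 1) := by
            rw [← Real.exp_add]; ring_nf
        _ = Real.exp (1 / Real.exp 1) ^ x := by
            rw [← Real.exp_one_rpow (1 / Real.exp 1), ← Real.rpow_mul (Real.exp_pos 1).le,
              Real.exp_one_rpow]
            ring_nf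
        _ ≤ t ^ x := Real.rpow_le_rpow (Real.exp_pos _).le h hx0.le
    exact one_div_le_one_div_of_le hx0 key
end

section
/- Let f : ℝⁿ → ℝ be differentiable with L_f-Lipschitz continuous gradient, let x ∈ ℝⁿ, d ∈ ℝⁿ with ‖d‖ = 1, δ > 0, c > 0, ε > 0, and set κ = -⟨∇f(x), d⟩/‖∇f(x)‖ (assuming ∇f(x) ≠ 0). If ‖∇f(x)‖ > ε, κ ≥ 1/(7√n), and δ ≤ (2/(7L_f + 14c)) · ε/√n, then f(x) - f(x + δd) ≥ cδ². -/
theorem stmt_4 {n : ℕ} (f : EuclideanSpace ℝ (Fin n) → ℝ) (Lf c ε δ : ℝ)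
    (hdiff : Differentiable ℝ f)
    (hlip : LipschitzWith (Real.toNNReal Lf) (fun y => gradient f y))
    (hLf : 0 < Lf) (hc : 0 < c) (hε : 0 < ε) (hδpos : 0 < δ)
    (x d : EuclideanSpace ℝ (Fin n)) (hd : ‖d‖ = 1)
    (hgrad : gradient f x ≠ 0)
    (hgnorm : ε < ‖gradient f x‖)
    (hκ : (1 : ℝ) / (7 * Real.sqrt n) ≤
      -(inner ℝ (gradient f x) d : ℝ) / ‖gradient f x‖)
    (hδ : δ ≤ 2 / (7 * Lf + 14 * c) * (ε / Real.sqrt n)) :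
    f x - f (x + δ • d) ≥ c * δ ^ 2 := by
  -- n ≥ 1
  have hn : 1 ≤ n := by
    by_contra h
    push_neg at h
    interval_cases n
    exact hgrad (Subsingleton.elim _ _)
  have hs : (1 : ℝ) ≤ Real.sqrt n := by
    rw [show (1:ℝ) = Real.sqrt 1 by simp]
    exact Real.sqrt_le_sqrt (by exact_mod_cast hn)
  have hs0 : (0 : ℝ) < Real.sqrt n := lt_of_lt_of_le one_pos hs
  set B : ℝ := inner ℝ (gradient f x) d with hB
  -- derivative of t ↦ f (x + t • d)
  have hderiv : ∀ t : ℝ, HasDerivAt (fun s : ℝ => f (x + s • d))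
      (inner ℝ (gradient f (x + t • d)) d : ℝ) t := by
    intro t
    have hcurve : HasDerivAt (fun s : ℝ => x + s • d) d t := by
      simpa using ((hasDerivAt_id t).smul_const d).const_add x
    have hf := (hdiff (x + t • d)).hasGradientAt
    rw [hasGradientAt_iff_hasFDerivAt] at hf
    have := hf.comp_hasDerivAt t hcurve
    simp [InnerProductSpace.toDual_apply_apply] at this ⊢
    exact this
  -- Lipschitz bound on derivative differences
  have hlip' : ∀ t : ℝ, 0 ≤ t →
      (inner ℝ (gradient f (x + t • d)) d : ℝ) - B ≤ Lf * t := by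
    intro t ht
    have h1 : (inner ℝ (gradient f (x + t • d)) d : ℝ) - B
        = inner ℝ (gradient f (x + t • d) - gradient f x) d := by
      rw [inner_sub_left]
    rw [h1]
    calc (inner ℝ (gradient f (x + t • d) - gradient f x) d : ℝ)
        ≤ ‖gradient f (x + t • d) - gradient f x‖ * ‖d‖ :=
          real_inner_le_norm _ _
      _ = ‖gradient f (x + t • d) - gradient f x‖ := by rw [hd, mul_one]
      _ ≤ Lf * t := by
          have h2 := hlip.dist_le_mul (x + t • d) x
          rw [dist_eq_norm] at h2
          have h3 : dist (x + t • d) x = t := by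
            simp [dist_eq_norm, norm_smul, hd, abs_of_nonneg ht]
          rw [h3] at h2
          simpa [Real.coe_toNNReal Lf hLf.le] using h2
  -- auxiliary function
  set F : ℝ → ℝ := fun t => f (x + t • d) - B * t - Lf / 2 * t ^ 2 with hF
  have hF' : ∀ t : ℝ, HasDerivAt F
      ((inner ℝ (gradient f (x + t • d)) d : ℝ) - B - Lf * t) t := by
    intro t
    have h1 : HasDerivAt (fun s : ℝ => B * s) B t := by
      simpa using (hasDerivAt_id t).const_mul B
    have h2 : HasDerivAt (fun s : ℝ => Lf / 2 * s ^ 2) (Lf * t) t := by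
      have := (hasDerivAt_pow 2 t).const_mul (Lf / 2)
      rw [show Lf * t = Lf / 2 * (((2:ℕ):ℝ) * t ^ (2 - 1)) by
        rw [show (2:ℕ) - 1 = 1 from rfl]; push_cast; ring]
      exact this
    exact ((hderiv t).sub h1).sub h2
  have hanti : AntitoneOn F (Set.Icc 0 δ) := by
    apply antitoneOn_of_deriv_nonpos (convex_Icc 0 δ)
    · exact Continuous.continuousOn (by
        simp only [hF]; have := hdiff.continuous; fun_prop)
    · intro t ht
      exact ((hF' t).differentiableAt).differentiableWithinAt
    · intro t ht
      rw [interior_Icc] at ht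
      rw [(hF' t).deriv]
      have := hlip' t ht.1.le
      linarith
  have hkey : F δ ≤ F 0 :=
    hanti (Set.left_mem_Icc.mpr hδpos.le) (Set.mem_Icc.mpr ⟨hδpos.le, le_refl δ⟩) hδpos.le
  have hF0 : F 0 = f x := by simp [hF]
  have hFδ : f (x + δ • d) ≤ f x + B * δ + Lf / 2 * δ ^ 2 := by
    have : f (x + δ • d) - B * δ - Lf / 2 * δ ^ 2 ≤ f x := by
      rw [← hF0]; exact hkey
    linarith
  -- arithmetic
  have hg0 : (0:ℝ) < ‖gradient f x‖ := lt_trans hε hgnorm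
  have hBneg : ε / (7 * Real.sqrt n) ≤ -B := by
    have h1 : ‖gradient f x‖ / (7 * Real.sqrt n) ≤ -B := by
      have := (div_le_div_iff₀ (by positivity) hg0).mp hκ
      rw [div_le_iff₀ (by positivity)]
      nlinarith
    have h2 : ε / (7 * Real.sqrt n) ≤ ‖gradient f x‖ / (7 * Real.sqrt n) := by
      gcongr
    exact le_trans h2 h1
  have hδ2 : (Lf / 2 + c) * δ ≤ ε / (7 * Real.sqrt n) := by
    have h7 : (0:ℝ) < 7 * Lf + 14 * c := by linarith
    have heq : (Lf / 2 + c) * (2 / (7 * Lf + 14 * c) * (ε / Real.sqrt n))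
        = ε / (7 * Real.sqrt n) := by
      field_simp
      ring
    calc (Lf / 2 + c) * δ ≤ (Lf / 2 + c) * (2 / (7 * Lf + 14 * c) * (ε / Real.sqrt n)) :=
          mul_le_mul_of_nonneg_left hδ (by positivity)
      _ = ε / (7 * Real.sqrt n) := heq
  have hfinal : (Lf / 2 + c) * δ ≤ -B := le_trans hδ2 hBneg
  nlinarith [hFδ, mul_le_mul_of_nonneg_right hfinal hδpos.le]
end

section
/- Let (Ω, ℱ, P) be a probability space with a filtration (ℱ_k), and let (W_k)_{k≥1} be random variables adapted such that conditionally on ℱ_k, W_{k+1} takes the value a > 0 with probability p and the value b < 0 with probability 1 - p, where v := p(a - b) + b > 0. Define Z̄_0 = b and Z̄_{k+1} = Z̄_k + W_{k+1}, and let τ̄ = inf{n ≥ 0 : Z̄_n ≥ 0}. Then E[τ̄] ≤ (a - b)/(p(a-b) + b). -/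
open MeasureTheory
open scoped ENNReal ENat

theorem stmt_6 {Ω : Type*} {m0 : MeasurableSpace Ω} (μ : Measure Ω)
    [IsProbabilityMeasure μ] (ℱ : Filtration ℕ m0)
    (W : ℕ → Ω → ℝ) (a b p : ℝ) (ha : 0 < a) (hb : b < 0)
    (hp0 : 0 ≤ p) (hp1 : p ≤ 1)
    (hdrift : 0 < p * (a - b) + b)
    (hadapted : ∀ k : ℕ, Measurable[ℱ (k + 1)] (W (k + 1)))
    (hvalues : ∀ k : ℕ, ∀ ω, W (k + 1) ω = a ∨ W (k + 1) ω = b)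
    (hcond : ∀ k : ℕ,
      μ[Set.indicator {ω | W (k + 1) ω = a} (fun _ => (1 : ℝ)) | ℱ k]
        =ᵐ[μ] fun _ => p)
    (Zbar : ℕ → Ω → ℝ)
    (hZ0 : ∀ ω, Zbar 0 ω = b)
    (hZS : ∀ k ω, Zbar (k + 1) ω = Zbar k ω + W (k + 1) ω)
    (τ : Ω → ℕ∞)
    (hτ : ∀ ω, τ ω = sInf {n : ℕ∞ | ∃ m : ℕ, (m : ℕ∞) = n ∧ 0 ≤ Zbar m ω}) :
    ∫⁻ ω, (τ ω : ℝ≥0∞) ∂μ ≤ ENNReal.ofReal ((a - b) / (p * (a - b) + b)) := by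
  classical
  set v : ℝ := p * (a - b) + b with hv
  set S : ℕ → Set Ω := fun j => {ω | ∀ m ≤ j, Zbar m ω < 0} with hSdef
  set A : ℕ → Set Ω := fun j => {ω | W (j + 1) ω = a} with hAdef
  have hcond' : ∀ j : ℕ,
      μ[Set.indicator (A j) (fun _ => (1 : ℝ)) | ℱ j] =ᵐ[μ] fun _ => p := hcond
  -- measurability
  have hZmeas : ∀ m : ℕ, Measurable[ℱ m] (Zbar m) := by
    intro m
    induction m with
    | zero =>
      have h0 : Zbar 0 = fun _ => b := funext hZ0
      rw [h0]; exact measurable_const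
    | succ k ih =>
      have h1 : Zbar (k + 1) = fun ω => Zbar k ω + W (k + 1) ω := funext (hZS k)
      rw [h1]
      exact (ih.mono (ℱ.mono (Nat.le_succ k)) le_rfl).add (hadapted k)
  have hSmeasF : ∀ j : ℕ, MeasurableSet[ℱ j] (S j) := by
    intro j
    have h2 : S j = ⋂ m ∈ Set.Iic j, {ω | Zbar m ω < 0} := by
      ext ω; simp [hSdef]
    rw [h2]
    refine MeasurableSet.biInter (Set.to_countable _) fun m hm => ?_
    exact (ℱ.mono hm) _ (measurableSet_lt (hZmeas m) measurable_const)
  have hSmeas : ∀ j : ℕ, MeasurableSet (S j) := fun j => ℱ.le j _ (hSmeasF j)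
  have hAmeas : ∀ j : ℕ, MeasurableSet (A j) := by
    intro j
    have : A j = W (j + 1) ⁻¹' {a} := by ext ω; simp [hAdef]
    rw [this]
    exact ℱ.le (j + 1) _ (hadapted j (measurableSet_singleton a))
  have hindint : ∀ j : ℕ, Integrable ((A j).indicator (fun _ => (1 : ℝ))) μ :=
    fun j => (integrable_const 1).indicator (hAmeas j)
  -- key conditional-expectation computation
  have hAq : ∀ j : ℕ,
      ∫ ω in S j, (A j).indicator (fun _ => (1 : ℝ)) ω ∂μ = p * (μ (S j)).toReal := by
    intro j
    have h1 := setIntegral_condExp (ℱ.le j) (hindint j) (hSmeasF j)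
    have h2 : ∫ ω in S j, (μ[(A j).indicator (fun _ => (1 : ℝ)) | ℱ j]) ω ∂μ
        = ∫ _ω in S j, p ∂μ :=
      setIntegral_congr_ae (hSmeas j) ((hcond' j).mono fun ω hω _ => hω)
    rw [← h1, h2, setIntegral_const, smul_eq_mul, mul_comm, Measure.real]
  -- representation of the increments
  have hWrep : ∀ j : ℕ,
      W (j + 1) = fun ω => (a - b) * (A j).indicator (fun _ => (1 : ℝ)) ω + b := by
    intro j; funext ω
    rcases hvalues j ω with h | h
    · have hmem : ω ∈ A j := by simp [hAdef, h]
      simp [Set.indicator_of_mem hmem, h]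
    · have hmem : ω ∉ A j := by
        intro hc
        simp only [hAdef, Set.mem_setOf_eq] at hc
        rw [h] at hc; linarith
      simp [Set.indicator_of_notMem hmem, h]
  have hWint : ∀ j : ℕ, Integrable (W (j + 1)) μ := by
    intro j
    rw [hWrep j]
    exact ((hindint j).const_mul _).add (integrable_const b)
  have hgI : ∀ j : ℕ, Integrable ((S j).indicator (W (j + 1))) μ :=
    fun j => (hWint j).indicator (hSmeas j)
  -- expectation of each stopped increment
  have hgint : ∀ j : ℕ,
      ∫ ω, (S j).indicator (W (j + 1)) ω ∂μ = v * (μ (S j)).toReal := by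
    intro j
    rw [integral_indicator (hSmeas j), hWrep j]
    rw [integral_add (((hindint j).restrict).const_mul _) (integrable_const b),
      integral_const_mul, hAq j, setIntegral_const, smul_eq_mul, Measure.real, hv]
    ring
  -- pointwise bound on stopped sums
  have key : ∀ (k : ℕ) ω,
      (b + ∑ j ∈ Finset.range k, (S j).indicator (W (j + 1)) ω ≤ a) ∧
      (ω ∈ S k → b + ∑ j ∈ Finset.range k, (S j).indicator (W (j + 1)) ω = Zbar k ω) := by
    intro k
    induction k with
    | zero =>
      intro ω
      refine ⟨by simp; linarith, fun _ => by simp [hZ0 ω]⟩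
    | succ k ih =>
      intro ω
      obtain ⟨h1, h2⟩ := ih ω
      rw [Finset.sum_range_succ]
      by_cases hmem : ω ∈ S k
      · have heq := h2 hmem
        have hneg : Zbar k ω < 0 := by
          have := hmem
          simp only [hSdef, Set.mem_setOf_eq] at this
          exact this k le_rfl
        have hWle : W (k + 1) ω ≤ a := by
          rcases hvalues k ω with h | h <;> rw [h] <;> linarith
        constructor
        · rw [Set.indicator_of_mem hmem]
          linarith
        · intro _
          rw [Set.indicator_of_mem hmem, hZS k ω]
          linarith
      · have hnm : ω ∉ S (k + 1) := by
          intro hc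
          apply hmem
          simp only [hSdef, Set.mem_setOf_eq] at hc ⊢
          exact fun m hm => hc m (hm.trans (Nat.le_succ k))
        refine ⟨?_, fun hc => absurd hc hnm⟩
        rw [Set.indicator_of_notMem hmem]
        simpa using h1
  -- sum of probabilities bound
  have hsum_le : ∀ k : ℕ, ∑ j ∈ Finset.range k, (μ (S j)).toReal ≤ (a - b) / v := by
    intro k
    have hintble : Integrable
        (fun ω => b + ∑ j ∈ Finset.range k, (S j).indicator (W (j + 1)) ω) μ :=
      (integrable_const b).add (integrable_finset_sum _ fun j _ => hgI j)
    have hle : ∫ ω, (b + ∑ j ∈ Finset.range k, (S j).indicator (W (j + 1)) ω) ∂μ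
        ≤ ∫ _ω, a ∂μ :=
      integral_mono hintble (integrable_const a) fun ω => (key k ω).1
    rw [integral_add (integrable_const b) (integrable_finset_sum _ fun j _ => hgI j),
      integral_finset_sum _ fun j _ => hgI j] at hle
    simp only [integral_const, measure_univ, ENNReal.toReal_one, probReal_univ, one_smul] at hle
    have hsum : ∑ j ∈ Finset.range k, ∫ ω, (S j).indicator (W (j + 1)) ω ∂μ
        = v * ∑ j ∈ Finset.range k, (μ (S j)).toReal := by
      rw [Finset.mul_sum]
      exact Finset.sum_congr rfl fun j _ => hgint j
    rw [hsum] at hle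
    rw [le_div_iff₀ hdrift]
    nlinarith [hle]
  -- relation between τ and the events S j
  have hτ_iff : ∀ (j : ℕ) ω, ((j : ℕ∞) < τ ω ↔ ω ∈ S j) := by
    intro j ω
    rw [hτ ω]
    constructor
    · intro h
      simp only [hSdef, Set.mem_setOf_eq]
      intro m hm
      by_contra hge
      push_neg at hge
      have hmemT : (m : ℕ∞) ∈ {n : ℕ∞ | ∃ m' : ℕ, (m' : ℕ∞) = n ∧ 0 ≤ Zbar m' ω} :=
        ⟨m, rfl, hge⟩
      exact absurd (lt_of_lt_of_le h (sInf_le hmemT))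
        (not_lt.mpr (by exact_mod_cast hm))
    · intro hωS
      simp only [hSdef, Set.mem_setOf_eq] at hωS
      have h1 : (j : ℕ∞) + 1 ≤ sInf {n : ℕ∞ | ∃ m : ℕ, (m : ℕ∞) = n ∧ 0 ≤ Zbar m ω} := by
        apply le_sInf
        rintro n ⟨m, rfl, hm0⟩
        have hjm : j < m := by
          by_contra hle
          push_neg at hle
          exact absurd hm0 (not_le.mpr (hωS m hle))
        exact_mod_cast Nat.succ_le_of_lt hjm
      exact lt_of_lt_of_le ((ENat.add_one_le_iff (by simp)).mp le_rfl) h1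
  -- rewrite the coercion of τ as a sum of indicators
  have hcoe : ∀ ω, (τ ω : ℝ≥0∞) = ∑' j : ℕ, (S j).indicator (fun _ => (1 : ℝ≥0∞)) ω := by
    intro ω
    have hind : ∀ j : ℕ, (S j).indicator (fun _ => (1 : ℝ≥0∞)) ω
        = if (j : ℕ∞) < τ ω then 1 else 0 := by
      intro j
      by_cases h : ω ∈ S j
      · rw [Set.indicator_of_mem h, if_pos ((hτ_iff j ω).mpr h)]
      · rw [Set.indicator_of_notMem h, if_neg fun hc => h ((hτ_iff j ω).mp hc)]
    simp_rw [hind]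
    generalize τ ω = x
    induction x using ENat.recTopCoe with
    | top =>
      rw [ENat.toENNReal_top]
      have : ∀ j : ℕ, (if (j : ℕ∞) < (⊤ : ℕ∞) then (1 : ℝ≥0∞) else 0) = 1 :=
        fun j => if_pos (lt_top_iff_ne_top.mpr (by simp))
      rw [tsum_congr this]
      exact (ENNReal.tsum_const_eq_top_of_ne_zero one_ne_zero).symm
    | coe n =>
      simp_rw [Nat.cast_lt]
      rw [ENat.toENNReal_coe]
      rw [tsum_eq_sum (s := Finset.range n)
        (fun j hj => if_neg (by simpa using hj))]
      rw [Finset.sum_congr rfl fun j hj => if_pos (Finset.mem_range.mp hj)]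
      simp
  -- compute the lintegral
  have hlin : ∫⁻ ω, (τ ω : ℝ≥0∞) ∂μ = ∑' j : ℕ, μ (S j) := by
    simp_rw [hcoe]
    rw [lintegral_tsum fun j => (measurable_const.indicator (hSmeas j)).aemeasurable]
    exact tsum_congr fun j => by
      rw [lintegral_indicator (hSmeas j)]
      simp
  rw [hlin, ENNReal.tsum_eq_iSup_nat]
  refine iSup_le fun k => ?_
  have h1 : ∑ j ∈ Finset.range k, μ (S j)
      = ENNReal.ofReal (∑ j ∈ Finset.range k, (μ (S j)).toReal) := by
    rw [ENNReal.ofReal_sum_of_nonneg fun j _ => ENNReal.toReal_nonneg]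
    exact Finset.sum_congr rfl fun j _ => (ENNReal.ofReal_toReal (measure_ne_top μ _)).symm
  rw [h1]
  exact ENNReal.ofReal_le_ofReal (hsum_le k)
end

section
/- Under the setting of the biased random walk with increments W_k taking value a > 0 with probability p and b < 0 with probability 1-p, drift v = p(a-b)+b > 0, and τ̄ the first time the walk started at b reaches level ≥ 0, the renewal interarrival time τ₁ (the first return time of the reflected process Z to its ceiling) satisfies E[τ₁] = p + (1 + E[τ̄])(1 - p), and consequently E[τ₁] ≤ p + (1-p)(1 + (a-b)/(p(a-b)+b)). -/
open MeasureTheory Set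
open scoped ENNReal

namespace Stmt7Aux

variable {Ω : Type*} {m0 : MeasurableSpace Ω} {μ : Measure Ω}
  [IsProbabilityMeasure μ] {ℱ : Filtration ℕ m0}
  {W : ℕ → Ω → ℝ} {a b p : ℝ}

lemma measA (hadapted : ∀ k : ℕ, Measurable[ℱ (k + 1)] (W (k + 1))) (k : ℕ) (c : ℝ) :
    MeasurableSet[ℱ (k+1)] {ω | W (k+1) ω = c} :=
  hadapted k (measurableSet_singleton c)

lemma meas_inter_a (hp0 : 0 ≤ p)
    (hadapted : ∀ k : ℕ, Measurable[ℱ (k + 1)] (W (k + 1)))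
    (hcond : ∀ k : ℕ,
      μ[Set.indicator {ω | W (k + 1) ω = a} (fun _ => (1 : ℝ)) | ℱ k] =ᵐ[μ] fun _ => p)
    (k : ℕ) {E : Set Ω} (hE : MeasurableSet[ℱ k] E) :
    μ (E ∩ {ω | W (k+1) ω = a}) = ENNReal.ofReal p * μ E := by
  set A := {ω | W (k+1) ω = a} with hAdef
  have hA : MeasurableSet A := ℱ.le (k+1) _ (measA hadapted k a)
  have hEm : MeasurableSet E := ℱ.le k _ hE
  have hint : Integrable (A.indicator (fun _ => (1:ℝ))) μ :=
    (integrable_indicator_iff hA).2 (integrableOn_const (measure_ne_top μ _))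
  have h1 : ∫ x in E, (A.indicator (fun _ => (1:ℝ))) x ∂μ = ∫ x in E, p ∂μ := by
    rw [← setIntegral_condExp (ℱ.le k) hint hE]
    exact integral_congr_ae (ae_restrict_of_ae (hcond k))
  rw [setIntegral_indicator hA, setIntegral_const, setIntegral_const] at h1
  have h2 : (μ (E ∩ A)).toReal = (ENNReal.ofReal p * μ E).toReal := by
    rw [ENNReal.toReal_mul, ENNReal.toReal_ofReal hp0]
    simpa [smul_eq_mul, mul_comm, measureReal_def] using h1
  exact (ENNReal.toReal_eq_toReal_iff' (measure_ne_top μ _)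
    (ENNReal.mul_ne_top ENNReal.ofReal_ne_top (measure_ne_top μ _))).mp h2

lemma meas_inter_b (ha : 0 < a) (hb : b < 0) (hp0 : 0 ≤ p) (hp1 : p ≤ 1)
    (hadapted : ∀ k : ℕ, Measurable[ℱ (k + 1)] (W (k + 1)))
    (hvalues : ∀ k : ℕ, ∀ ω, W (k + 1) ω = a ∨ W (k + 1) ω = b)
    (hcond : ∀ k : ℕ,
      μ[Set.indicator {ω | W (k + 1) ω = a} (fun _ => (1 : ℝ)) | ℱ k] =ᵐ[μ] fun _ => p)
    (k : ℕ) {E : Set Ω} (hE : MeasurableSet[ℱ k] E) :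
    μ (E ∩ {ω | W (k+1) ω = b}) = ENNReal.ofReal (1-p) * μ E := by
  have hab : a ≠ b := by linarith
  have hsplit : E = (E ∩ {ω | W (k+1) ω = a}) ∪ (E ∩ {ω | W (k+1) ω = b}) := by
    ext ω; constructor
    · intro hω
      rcases hvalues k ω with h | h
      · exact Or.inl ⟨hω, h⟩
      · exact Or.inr ⟨hω, h⟩
    · rintro (⟨h, _⟩ | ⟨h, _⟩) <;> exact h
  have hdisj : Disjoint (E ∩ {ω | W (k+1) ω = a}) (E ∩ {ω | W (k+1) ω = b}) := by
    rw [Set.disjoint_left]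
    rintro ω ⟨_, h1⟩ ⟨_, h2⟩
    exact hab (h1.symm.trans h2)
  have hBm : MeasurableSet (E ∩ {ω | W (k+1) ω = b}) :=
    (ℱ.le k _ hE).inter (ℱ.le (k+1) _ (measA hadapted k b))
  have hsum : μ (E ∩ {ω | W (k+1) ω = a}) + μ (E ∩ {ω | W (k+1) ω = b}) = μ E := by
    rw [← measure_union hdisj hBm, ← hsplit]
  rw [meas_inter_a hp0 hadapted hcond k hE] at hsum
  have hone : ENNReal.ofReal p * μ E + ENNReal.ofReal (1-p) * μ E = μ E := by
    rw [← add_mul, ← ENNReal.ofReal_add hp0 (by linarith)]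
    norm_num
  have := hsum.trans hone.symm
  exact (ENNReal.add_right_inj (ENNReal.mul_ne_top ENNReal.ofReal_ne_top (measure_ne_top μ _))).mp this


/-- Cylinder set: the paths whose increments `W (j+k+1)` for `k < n` follow pattern `v`. -/
def cylSet (W : ℕ → Ω → ℝ) (a b : ℝ) (j n : ℕ) (v : ℕ → Bool) : Set Ω :=
  {ω | ∀ k < n, W (j+k+1) ω = (if v k then a else b)}

noncomputable def wt (p : ℝ) (n : ℕ) (v : ℕ → Bool) : ℝ≥0∞ :=
  ∏ k ∈ Finset.range n, (if v k then ENNReal.ofReal p else ENNReal.ofReal (1-p))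


lemma cylSet_succ (j n : ℕ) (v : ℕ → Bool) :
    cylSet W a b j (n+1) v
      = cylSet W a b j n v ∩ {ω | W (j+n+1) ω = (if v n then a else b)} := by
  ext ω
  simp only [cylSet, mem_setOf_eq, mem_inter_iff]
  constructor
  · intro h
    exact ⟨fun k hk => h k (by omega), h n (by omega)⟩
  · rintro ⟨h1, h2⟩ k hk
    rcases Nat.lt_succ_iff_lt_or_eq.mp hk with h | h
    · exact h1 k h
    · subst h; exact h2

lemma cylSet_meas (hadapted : ∀ k : ℕ, Measurable[ℱ (k + 1)] (W (k + 1)))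
    (j n : ℕ) (v : ℕ → Bool) : MeasurableSet[ℱ (j+n)] (cylSet W a b j n v) := by
  have : cylSet W a b j n v = ⋂ k ∈ Finset.range n, {ω | W (j+k+1) ω = (if v k then a else b)} := by
    ext ω; simp [cylSet]
  rw [this]
  refine MeasurableSet.biInter (Finset.range n).countable_toSet (fun k hk => ?_)
  have hk' : k < n := Finset.mem_range.mp hk
  exact ℱ.mono (by omega) _ (measA hadapted (j+k) _)

lemma cylSet_zero_meas (ha : 0 < a) (hb : b < 0) (hp0 : 0 ≤ p) (hp1 : p ≤ 1)
    (hadapted : ∀ k : ℕ, Measurable[ℱ (k + 1)] (W (k + 1)))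
    (hvalues : ∀ k : ℕ, ∀ ω, W (k + 1) ω = a ∨ W (k + 1) ω = b)
    (hcond : ∀ k : ℕ,
      μ[Set.indicator {ω | W (k + 1) ω = a} (fun _ => (1 : ℝ)) | ℱ k] =ᵐ[μ] fun _ => p)
    (n : ℕ) (v : ℕ → Bool) : μ (cylSet W a b 0 n v) = wt p n v := by
  induction n with
  | zero =>
      have : cylSet W a b 0 0 v = univ := by ext ω; simp [cylSet]
      simp [this, wt]
  | succ n ih =>
      rw [cylSet_succ, wt, Finset.prod_range_succ, ← wt]
      have hE : MeasurableSet[ℱ n] (cylSet W a b 0 n v) := by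
        have h := cylSet_meas (a := a) (b := b) hadapted 0 n v
        rwa [Nat.zero_add] at h
      cases hv : v n
      · simp only [hv, Bool.false_eq_true, if_false]
        rw [show (0+n+1) = n+1 by omega]
        rw [meas_inter_b ha hb hp0 hp1 hadapted hvalues hcond n hE, ih, mul_comm]
      · simp only [hv, if_true]
        rw [show (0+n+1) = n+1 by omega]
        rw [meas_inter_a hp0 hadapted hcond n hE, ih, mul_comm]

lemma cylSet_one_meas (ha : 0 < a) (hb : b < 0) (hp0 : 0 ≤ p) (hp1 : p ≤ 1)
    (hadapted : ∀ k : ℕ, Measurable[ℱ (k + 1)] (W (k + 1)))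
    (hvalues : ∀ k : ℕ, ∀ ω, W (k + 1) ω = a ∨ W (k + 1) ω = b)
    (hcond : ∀ k : ℕ,
      μ[Set.indicator {ω | W (k + 1) ω = a} (fun _ => (1 : ℝ)) | ℱ k] =ᵐ[μ] fun _ => p)
    (n : ℕ) (v : ℕ → Bool) :
    μ ({ω | W 1 ω = b} ∩ cylSet W a b 1 n v) = ENNReal.ofReal (1-p) * wt p n v := by
  induction n with
  | zero =>
      have : cylSet W a b 1 0 v = univ := by ext ω; simp [cylSet]
      rw [this, inter_univ]
      have h0 : ({ω | W 1 ω = b} : Set Ω) = univ ∩ {ω | W (0+1) ω = b} := by simp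
      rw [h0, meas_inter_b ha hb hp0 hp1 hadapted hvalues hcond 0 MeasurableSet.univ]
      simp [wt]
  | succ n ih =>
      rw [cylSet_succ, ← inter_assoc, wt, Finset.prod_range_succ, ← wt]
      have hE : MeasurableSet[ℱ (n+1)] ({ω | W 1 ω = b} ∩ cylSet W a b 1 n v) := by
        refine MeasurableSet.inter ?_ ?_
        · exact ℱ.mono (by omega) _ (measA hadapted 0 b)
        · have h := cylSet_meas (a := a) (b := b) hadapted 1 n v
          rwa [Nat.add_comm 1 n] at h
      cases hv : v n
      · simp only [hv, Bool.false_eq_true, if_false]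
        rw [show (1+n+1) = (n+1)+1 by omega]
        rw [meas_inter_b ha hb hp0 hp1 hadapted hvalues hcond (n+1) hE, ih]
        ring
      · simp only [hv, if_true]
        rw [show (1+n+1) = (n+1)+1 by omega]
        rw [meas_inter_a hp0 hadapted hcond (n+1) hE, ih]
        ring

/-- Extend a finite Boolean vector by `false`. -/
def extV {n : ℕ} (V : Fin n → Bool) : ℕ → Bool :=
  fun k => if h : k < n then V ⟨k, h⟩ else false

lemma mem_cylSet_iff_bits (ha : 0 < a) (hb : b < 0)
    (hvalues : ∀ k : ℕ, ∀ ω, W (k + 1) ω = a ∨ W (k + 1) ω = b)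
    (j n : ℕ) (v : ℕ → Bool) (ω : Ω) :
    ω ∈ cylSet W a b j n v ↔ ∀ k < n, (decide (W (j+k+1) ω = a)) = v k := by
  have hab : a ≠ b := by linarith
  constructor
  · intro h k hk
    have := h k hk
    cases hv : v k
    · rw [hv] at this; simp only [if_false, Bool.false_eq_true] at this
      simp only [decide_eq_false_iff_not]
      rw [this]; exact fun hc => hab hc.symm
    · rw [hv] at this; simp only [if_true] at this
      simp [this]
  · intro h k hk
    have := h k hk
    cases hv : v k
    · rw [hv, decide_eq_false_iff_not] at this
      simp only [hv, Bool.false_eq_true, if_false]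
      rcases hvalues (j+k) ω with hc | hc
      · exact absurd hc this
      · exact hc
    · rw [hv, decide_eq_true_eq] at this
      simp [hv, this]

lemma event_eq_biUnion (ha : 0 < a) (hb : b < 0)
    (hvalues : ∀ k : ℕ, ∀ ω, W (k + 1) ω = a ∨ W (k + 1) ω = b)
    (j n : ℕ) (Q : (ℕ → Bool) → Prop)
    [DecidablePred fun V : Fin n → Bool => Q (extV V)]
    (hQ : ∀ f g : ℕ → Bool, (∀ k < n, f k = g k) → Q f → Q g) :
    {ω | Q (fun k => decide (W (j+k+1) ω = a))}
      = ⋃ V ∈ Finset.univ.filter (fun V : Fin n → Bool => Q (extV V)),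
          cylSet W a b j n (extV V) := by
  ext ω
  simp only [mem_setOf_eq, mem_iUnion, Finset.mem_filter, Finset.mem_univ, true_and,
    exists_prop]
  constructor
  · intro h
    refine ⟨fun k => decide (W (j+(k:ℕ)+1) ω = a), ?_, ?_⟩
    · refine hQ _ _ (fun k hk => ?_) h
      simp [extV, hk]
    · rw [mem_cylSet_iff_bits ha hb hvalues]
      intro k hk
      simp [extV, hk]
  · rintro ⟨V, hQV, hmem⟩
    rw [mem_cylSet_iff_bits ha hb hvalues] at hmem
    exact hQ (extV V) _ (fun k hk => (hmem k hk).symm) hQV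

lemma cylSet_pairwise_disjoint (ha : 0 < a) (hb : b < 0) {n : ℕ} (j : ℕ)
    {V V' : Fin n → Bool} (hne : V ≠ V') :
    Disjoint (cylSet W (a := a) (b := b) j n (extV V)) (cylSet W a b j n (extV V')) := by
  have hab : a ≠ b := by linarith
  obtain ⟨k, hk⟩ := Function.ne_iff.mp hne
  rw [Set.disjoint_left]
  intro ω h1 h2
  have e1 := h1 (k : ℕ) k.isLt
  have e2 := h2 (k : ℕ) k.isLt
  rw [e1] at e2
  simp only [extV, k.isLt, dif_pos, Fin.eta] at e2
  apply hk
  cases hV : V k <;> cases hV' : V' k <;> rw [hV, hV'] at e2 <;> simp_all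

lemma measure_event_zero (ha : 0 < a) (hb : b < 0) (hp0 : 0 ≤ p) (hp1 : p ≤ 1)
    (hadapted : ∀ k : ℕ, Measurable[ℱ (k + 1)] (W (k + 1)))
    (hvalues : ∀ k : ℕ, ∀ ω, W (k + 1) ω = a ∨ W (k + 1) ω = b)
    (hcond : ∀ k : ℕ,
      μ[Set.indicator {ω | W (k + 1) ω = a} (fun _ => (1 : ℝ)) | ℱ k] =ᵐ[μ] fun _ => p)
    (n : ℕ) (Q : (ℕ → Bool) → Prop)
    (hQ : ∀ f g : ℕ → Bool, (∀ k < n, f k = g k) → Q f → Q g) :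
    μ {ω | W 1 ω = b ∧ Q (fun k => decide (W (k+2) ω = a))}
      = ENNReal.ofReal (1-p) * μ {ω | Q (fun k => decide (W (k+1) ω = a))} := by
  classical
  have e0 : {ω | Q (fun k => decide (W (k+1) ω = a))}
      = {ω | Q (fun k => decide (W (0+k+1) ω = a))} := by
    simp only [Nat.zero_add]
  have e1 : {ω | W 1 ω = b ∧ Q (fun k => decide (W (k+2) ω = a))}
      = {ω | W 1 ω = b} ∩ {ω | Q (fun k => decide (W (1+k+1) ω = a))} := by
    ext ω
    have : ∀ k : ℕ, 1+k+1 = k+2 := fun k => by omega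
    simp only [mem_inter_iff, mem_setOf_eq, this]
  rw [e0, e1, event_eq_biUnion ha hb hvalues 0 n Q hQ,
    event_eq_biUnion ha hb hvalues 1 n Q hQ]
  set S := Finset.univ.filter (fun V : Fin n → Bool => Q (extV V)) with hS
  rw [Set.inter_iUnion₂]
  rw [measure_biUnion_finset ?hd1 ?hm1, measure_biUnion_finset ?hd2 ?hm2]
  case hd1 =>
    intro V hV V' hV' hne
    exact (cylSet_pairwise_disjoint (W := W) ha hb 1 hne).mono inf_le_right inf_le_right
  case hm1 =>
    intro V hV
    exact (ℱ.le 1 _ (measA hadapted 0 b)).inter (ℱ.le _ _ (cylSet_meas hadapted 1 n _))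
  case hd2 =>
    intro V hV V' hV' hne
    exact cylSet_pairwise_disjoint (W := W) ha hb 0 hne
  case hm2 =>
    intro V hV
    exact ℱ.le _ _ (cylSet_meas hadapted 0 n _)
  rw [Finset.mul_sum]
  refine Finset.sum_congr rfl (fun V hV => ?_)
  rw [cylSet_one_meas ha hb hp0 hp1 hadapted hvalues hcond n (extV V),
    cylSet_zero_meas ha hb hp0 hp1 hadapted hvalues hcond n (extV V)]

lemma enat_lt_sInf_iff (S : Set ℕ∞) (n : ℕ) :
    (n : ℕ∞) < sInf S ↔ ∀ x ∈ S, (n:ℕ∞) < x := by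
  constructor
  · intro h x hx
    exact lt_of_lt_of_le h (sInf_le hx)
  · intro h
    have hle : ((n+1 : ℕ) : ℕ∞) ≤ sInf S := by
      refine le_sInf (fun x hx => ?_)
      have := h x hx
      induction x using ENat.recTopCoe with
      | top => exact le_top
      | coe m =>
        have hm : n < m := by exact_mod_cast this
        exact_mod_cast Nat.succ_le_of_lt hm
    exact lt_of_lt_of_le (by exact_mod_cast Nat.lt_succ_self n) hle

/-- The deterministic walk read off from a bit sequence. -/
def zb (a b : ℝ) (f : ℕ → Bool) (m : ℕ) : ℝ :=
  b + ∑ k ∈ Finset.range m, (if f k then a else b)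

lemma zb_succ (f : ℕ → Bool) (m : ℕ) :
    zb a b f (m+1) = zb a b f m + (if f m then a else b) := by
  simp [zb, Finset.sum_range_succ, add_assoc]

lemma zb_congr {f g : ℕ → Bool} {n : ℕ} (h : ∀ k < n, f k = g k) {m : ℕ} (hm : m ≤ n) :
    zb a b f m = zb a b g m := by
  unfold zb
  congr 1
  exact Finset.sum_congr rfl (fun k hk => by rw [h k (lt_of_lt_of_le (Finset.mem_range.mp hk) hm)])

lemma bitval (ha : 0 < a) (hb : b < 0)
    (hvalues : ∀ k : ℕ, ∀ ω, W (k + 1) ω = a ∨ W (k + 1) ω = b)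
    (m : ℕ) (ω : Ω) : (if decide (W (m+1) ω = a) then a else b) = W (m+1) ω := by
  have hab : a ≠ b := by linarith
  rcases hvalues m ω with h | h
  · simp [h]
  · rw [if_neg, h]
    simp only [decide_eq_true_eq, h]
    exact fun hc => hab hc.symm

section Walk

variable {Zbar : ℕ → Ω → ℝ} {τbar : Ω → ℕ∞} {L : ℝ} {Z : ℕ → Ω → ℝ} {τ₁ : Ω → ℕ∞}

lemma Zbar_eq_zb (ha : 0 < a) (hb : b < 0)
    (hvalues : ∀ k : ℕ, ∀ ω, W (k + 1) ω = a ∨ W (k + 1) ω = b)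
    (hZbar0 : ∀ ω, Zbar 0 ω = b) (hZbarS : ∀ k ω, Zbar (k + 1) ω = Zbar k ω + W (k + 1) ω)
    (m : ℕ) (ω : Ω) :
    Zbar m ω = zb a b (fun k => decide (W (k+1) ω = a)) m := by
  induction m with
  | zero => simp [zb, hZbar0]
  | succ m ih => rw [hZbarS, zb_succ, ih, bitval ha hb hvalues]

lemma tau_bar_tail (hτbar : ∀ ω, τbar ω = sInf {n : ℕ∞ | ∃ m : ℕ, (m : ℕ∞) = n ∧ 0 ≤ Zbar m ω})
    (n : ℕ) (ω : Ω) :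
    (n:ℕ∞) < τbar ω ↔ ∀ m ≤ n, Zbar m ω < 0 := by
  rw [hτbar ω, enat_lt_sInf_iff]
  constructor
  · intro h m hm
    by_contra hc
    push_neg at hc
    have := h (m : ℕ∞) ⟨m, rfl, hc⟩
    exact absurd (Nat.cast_lt.mp this) (by omega)
  · rintro h x ⟨m, rfl, hm⟩
    by_contra hc
    push_neg at hc
    exact absurd hm (not_le.mpr (h m (Nat.cast_le.mp hc)))

lemma Z_le (hZ0 : ∀ ω, Z 0 ω = L) (hZS : ∀ k ω, Z (k + 1) ω = min (Z k ω + W (k + 1) ω) L)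
    (m : ℕ) (ω : Ω) : Z m ω ≤ L := by
  cases m with
  | zero => exact le_of_eq (hZ0 ω)
  | succ m => rw [hZS]; exact min_le_right _ _

lemma D1 (ha : 0 < a) (hb : b < 0)
    (hvalues : ∀ k : ℕ, ∀ ω, W (k + 1) ω = a ∨ W (k + 1) ω = b)
    (hZ0 : ∀ ω, Z 0 ω = L)
    (hZS : ∀ k ω, Z (k + 1) ω = min (Z k ω + W (k + 1) ω) L)
    (ω : Ω) (hW1 : W 1 ω = b) (j : ℕ)
    (hneg : ∀ i ≤ j, zb a b (fun k => decide (W (k+2) ω = a)) i < 0) :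
    Z (j+1) ω = L + zb a b (fun k => decide (W (k+2) ω = a)) j := by
  set f : ℕ → Bool := fun k => decide (W (k+2) ω = a) with hf
  have hstep : ∀ i : ℕ, zb a b f (i+1) = zb a b f i + W (i+2) ω := by
    intro i
    rw [zb_succ]
    congr 1
    exact bitval ha hb hvalues (i+1) ω
  induction j with
  | zero =>
      rw [hZS, hZ0, hW1]
      have : zb a b f 0 = b := by simp [zb]
      rw [this, min_eq_left (by linarith)]
  | succ j ih =>
      have ihj := ih (fun i hi => hneg i (by omega))
      rw [hZS, ihj, add_assoc, ← hstep j, min_eq_left]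
      have := hneg (j+1) (le_refl _)
      linarith

lemma D2 (ha : 0 < a) (hb : b < 0)
    (hvalues : ∀ k : ℕ, ∀ ω, W (k + 1) ω = a ∨ W (k + 1) ω = b)
    (hZ0 : ∀ ω, Z 0 ω = L)
    (hZS : ∀ k ω, Z (k + 1) ω = min (Z k ω + W (k + 1) ω) L)
    (ω : Ω) (m : ℕ) (h : ∀ j, 1 ≤ j → j ≤ m+1 → Z j ω < L) :
    W 1 ω = b ∧ ∀ i ≤ m, zb a b (fun k => decide (W (k+2) ω = a)) i < 0 := by
  set f : ℕ → Bool := fun k => decide (W (k+2) ω = a) with hf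
  have hW1 : W 1 ω = b := by
    have h1 := h 1 le_rfl (by omega)
    rcases hvalues 0 ω with hc | hc
    · rw [hZS, hZ0, hc, min_eq_right (by linarith)] at h1
      exact absurd h1 (lt_irrefl L)
    · exact hc
  refine ⟨hW1, ?_⟩
  have key : ∀ i, i ≤ m → ∀ t ≤ i, zb a b f t < 0 := by
    intro i
    induction i with
    | zero =>
        intro _ t ht
        have : t = 0 := by omega
        subst this
        simpa [zb] using hb
    | succ i ih =>
        intro hi t ht
        rcases Nat.lt_succ_iff_lt_or_eq.mp (Nat.lt_succ_of_le ht) with hlt | heq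
        · exact ih (by omega) t (by omega)
        · subst heq
          have hprev : ∀ s ≤ i, zb a b f s < 0 := ih (by omega)
          have hZi := D1 ha hb hvalues hZ0 hZS ω hW1 i hprev
          have hZlt := h (i+2) (by omega) (by omega)
          rw [hZS, hZi, add_assoc] at hZlt
          have hstep : zb a b f i + W (i+2) ω = zb a b f (i+1) := by
            rw [zb_succ]
            congr 1
            exact (bitval ha hb hvalues (i+1) ω).symm
          rw [hstep] at hZlt
          by_contra hc
          push_neg at hc
          rw [min_eq_right (by linarith)] at hZlt
          exact absurd hZlt (lt_irrefl L)
  exact fun i hi => key i hi i le_rfl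

lemma tau1_pos (hτ₁ : ∀ ω, τ₁ ω = sInf {n : ℕ∞ | ∃ m : ℕ, (m : ℕ∞) = n ∧ 0 < m ∧ Z m ω = L})
    (ω : Ω) : (0:ℕ∞) < τ₁ ω := by
  rw [hτ₁ ω, show ((0:ℕ∞)) = ((0:ℕ):ℕ∞) by simp, enat_lt_sInf_iff]
  rintro x ⟨m, rfl, hm, _⟩
  exact_mod_cast hm

lemma tau1_tail (ha : 0 < a) (hb : b < 0)
    (hvalues : ∀ k : ℕ, ∀ ω, W (k + 1) ω = a ∨ W (k + 1) ω = b)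
    (hZ0 : ∀ ω, Z 0 ω = L)
    (hZS : ∀ k ω, Z (k + 1) ω = min (Z k ω + W (k + 1) ω) L)
    (hτ₁ : ∀ ω, τ₁ ω = sInf {n : ℕ∞ | ∃ m : ℕ, (m : ℕ∞) = n ∧ 0 < m ∧ Z m ω = L})
    (n : ℕ) (ω : Ω) :
    ((n+1:ℕ):ℕ∞) < τ₁ ω
      ↔ (W 1 ω = b ∧ ∀ m ≤ n, zb a b (fun k => decide (W (k+2) ω = a)) m < 0) := by
  rw [hτ₁ ω, enat_lt_sInf_iff]
  have hiff : (∀ x ∈ {x : ℕ∞ | ∃ m : ℕ, (m : ℕ∞) = x ∧ 0 < m ∧ Z m ω = L}, ((n+1:ℕ):ℕ∞) < x)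
      ↔ ∀ j, 1 ≤ j → j ≤ n+1 → Z j ω < L := by
    constructor
    · intro h j hj1 hj2
      rcases lt_or_eq_of_le (Z_le hZ0 hZS j ω) with hlt | heq
      · exact hlt
      · have := h (j:ℕ∞) ⟨j, rfl, by omega, heq⟩
        exact absurd (Nat.cast_lt.mp this) (by omega)
    · rintro h x ⟨m, rfl, hm, hZm⟩
      by_contra hc
      push_neg at hc
      have hmn : m ≤ n+1 := Nat.cast_le.mp hc
      exact absurd hZm (ne_of_lt (h m hm hmn))
  rw [hiff]
  constructor
  · intro h
    exact D2 ha hb hvalues hZ0 hZS ω n h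
  · rintro ⟨hW1, hneg⟩ j hj1 hj2
    obtain ⟨i, rfl⟩ : ∃ i, j = i + 1 := ⟨j - 1, by omega⟩
    rw [D1 ha hb hvalues hZ0 hZS ω hW1 i (fun t ht => hneg t (by omega))]
    have := hneg i (by omega)
    linarith

end Walk

lemma enat_coe_eq_tsum (t : ℕ∞) :
    (t : ℝ≥0∞) = ∑' n : ℕ, (if (n:ℕ∞) < t then (1:ℝ≥0∞) else 0) := by
  induction t using ENat.recTopCoe with
  | top =>
      have : ∀ n : ℕ, (if ((n:ℕ∞)) < (⊤:ℕ∞) then (1:ℝ≥0∞) else 0) = 1 := by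
        intro n
        simp [WithTop.coe_lt_top]
      simp only [this, ENat.toENNReal_top]
      exact (ENNReal.tsum_const_eq_top_of_ne_zero one_ne_zero).symm
  | coe m =>
      rw [ENat.toENNReal_coe]
      have hv : ∀ n : ℕ, n ∉ Finset.range m → (if ((n:ℕ∞)) < ((m:ℕ∞)) then (1:ℝ≥0∞) else 0) = 0 := by
        intro n hn
        rw [if_neg]
        simp only [Finset.mem_range] at hn
        exact fun hc => hn (Nat.cast_lt.mp hc)
      rw [tsum_eq_sum hv]
      have : ∀ n ∈ Finset.range m, (if ((n:ℕ∞)) < ((m:ℕ∞)) then (1:ℝ≥0∞) else 0) = 1 := by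
        intro n hn
        rw [if_pos (Nat.cast_lt.mpr (Finset.mem_range.mp hn))]
      rw [Finset.sum_congr rfl this]
      simp

lemma lintegral_enat (τ : Ω → ℕ∞)
    (hmeas : ∀ n : ℕ, MeasurableSet {ω | (n:ℕ∞) < τ ω}) :
    ∫⁻ ω, (τ ω : ℝ≥0∞) ∂μ = ∑' n : ℕ, μ {ω | (n:ℕ∞) < τ ω} := by
  have h1 : ∀ ω, (τ ω : ℝ≥0∞) = ∑' n : ℕ, Set.indicator {ω | (n:ℕ∞) < τ ω} (fun _ => (1:ℝ≥0∞)) ω := by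
    intro ω
    rw [enat_coe_eq_tsum]
    congr 1
    funext n
    by_cases h : (n:ℕ∞) < τ ω
    · rw [if_pos h, Set.indicator_of_mem (show ω ∈ {ω | (n:ℕ∞) < τ ω} from h)]
    · rw [if_neg h, Set.indicator_of_notMem (show ω ∉ {ω | (n:ℕ∞) < τ ω} from h)]
  calc ∫⁻ ω, (τ ω : ℝ≥0∞) ∂μ
      = ∫⁻ ω, ∑' n : ℕ, Set.indicator {ω | (n:ℕ∞) < τ ω} (fun _ => (1:ℝ≥0∞)) ω ∂μ := by
        exact lintegral_congr h1
    _ = ∑' n : ℕ, ∫⁻ ω, Set.indicator {ω | (n:ℕ∞) < τ ω} (fun _ => (1:ℝ≥0∞)) ω ∂μ := by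
        exact lintegral_tsum (fun n => ((measurable_const.indicator (hmeas n)).aemeasurable))
    _ = ∑' n : ℕ, μ {ω | (n:ℕ∞) < τ ω} := by
        refine tsum_congr (fun n => ?_)
        rw [lintegral_indicator (hmeas n)]
        simp

section Stopped

variable {Zbar : ℕ → Ω → ℝ}

open Classical in
noncomputable def stopped (Zbar : ℕ → Ω → ℝ) (b : ℝ) : ℕ → Ω → ℝ
  | 0 => fun _ => b
  | (k+1) => fun ω =>
      if ∀ m ≤ k, Zbar m ω < 0 then Zbar (k+1) ω else stopped Zbar b k ω

lemma stopped_eq_of_lt (hZbar0 : ∀ ω, Zbar 0 ω = b) (k : ℕ) (ω : Ω)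
    (h : ∀ m ≤ k, Zbar m ω < 0) : stopped Zbar b k ω = Zbar k ω := by
  induction k with
  | zero => simp [stopped, hZbar0]
  | succ k ih =>
      simp only [stopped]
      rw [if_pos (fun m hm => h m (by omega))]

lemma stopped_le (ha : 0 < a) (hb : b < 0)
    (hvalues : ∀ k : ℕ, ∀ ω, W (k + 1) ω = a ∨ W (k + 1) ω = b)
    (hZbarS : ∀ k ω, Zbar (k + 1) ω = Zbar k ω + W (k + 1) ω)
    (n : ℕ) (ω : Ω) : stopped Zbar b n ω ≤ a := by
  induction n with
  | zero => simp only [stopped]; linarith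
  | succ n ih =>
      simp only [stopped]
      split_ifs with h
      · have h1 : Zbar n ω < 0 := h n le_rfl
        have h2 : W (n+1) ω ≤ a := by
          rcases hvalues n ω with hc | hc <;> rw [hc] <;> linarith
        rw [hZbarS]
        linarith
      · exact ih

lemma stopped_succ_eq (hZbar0 : ∀ ω, Zbar 0 ω = b)
    (hZbarS : ∀ k ω, Zbar (k + 1) ω = Zbar k ω + W (k + 1) ω) (k : ℕ) :
    stopped Zbar b (k+1) = fun ω => stopped Zbar b k ω
      + Set.indicator {ω | ∀ m ≤ k, Zbar m ω < 0} (W (k+1)) ω := by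
  funext ω
  simp only [stopped]
  by_cases h : ∀ m ≤ k, Zbar m ω < 0
  · rw [if_pos h, Set.indicator_of_mem (show ω ∈ {ω | ∀ m ≤ k, Zbar m ω < 0} from h),
      stopped_eq_of_lt hZbar0 k ω h, hZbarS]
  · rw [if_neg h, Set.indicator_of_notMem (show ω ∉ {ω | ∀ m ≤ k, Zbar m ω < 0} from h)]
    ring

lemma indicator_W_decomp (ha : 0 < a) (hb : b < 0)
    (hvalues : ∀ k : ℕ, ∀ ω, W (k + 1) ω = a ∨ W (k + 1) ω = b)
    (k : ℕ) (G : Set Ω) :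
    Set.indicator G (W (k+1)) = fun ω =>
      a * Set.indicator (G ∩ {ω | W (k+1) ω = a}) (fun _ => (1:ℝ)) ω
      + b * Set.indicator (G ∩ {ω | W (k+1) ω = b}) (fun _ => (1:ℝ)) ω := by
  have hab : a ≠ b := by linarith
  funext ω
  by_cases hG : ω ∈ G
  · rcases hvalues k ω with hc | hc
    · rw [Set.indicator_of_mem hG, hc,
        Set.indicator_of_mem (show ω ∈ G ∩ {ω | W (k+1) ω = a} from ⟨hG, hc⟩),
        Set.indicator_of_notMem (show ω ∉ G ∩ {ω | W (k+1) ω = b} from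
          fun hmem => hab (hc.symm.trans hmem.2))]
      ring
    · rw [Set.indicator_of_mem hG, hc,
        Set.indicator_of_notMem (show ω ∉ G ∩ {ω | W (k+1) ω = a} from
          fun hmem => hab (hmem.2.symm.trans hc)),
        Set.indicator_of_mem (show ω ∈ G ∩ {ω | W (k+1) ω = b} from ⟨hG, hc⟩)]
      ring
  · rw [Set.indicator_of_notMem hG,
      Set.indicator_of_notMem (fun hmem => hG hmem.1),
      Set.indicator_of_notMem (fun hmem => hG hmem.1)]
    ring

lemma Zbar_meas_filt {ℱ : Filtration ℕ m0}
    (hadapted : ∀ k : ℕ, Measurable[ℱ (k + 1)] (W (k + 1)))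
    (hZbar0 : ∀ ω, Zbar 0 ω = b)
    (hZbarS : ∀ k ω, Zbar (k + 1) ω = Zbar k ω + W (k + 1) ω)
    {m k : ℕ} (hm : m ≤ k) : Measurable[ℱ k] (Zbar m) := by
  induction m with
  | zero =>
      have : Zbar 0 = fun _ => b := funext hZbar0
      rw [this]; exact measurable_const
  | succ m ih =>
      have : Zbar (m+1) = fun ω => Zbar m ω + W (m+1) ω := funext (hZbarS m)
      rw [this]
      exact ((ih (by omega)).add ((hadapted m).mono (ℱ.mono hm) le_rfl))

lemma Gset_meas_filt {ℱ : Filtration ℕ m0}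
    (hadapted : ∀ k : ℕ, Measurable[ℱ (k + 1)] (W (k + 1)))
    (hZbar0 : ∀ ω, Zbar 0 ω = b)
    (hZbarS : ∀ k ω, Zbar (k + 1) ω = Zbar k ω + W (k + 1) ω)
    (k : ℕ) : MeasurableSet[ℱ k] {ω | ∀ m ≤ k, Zbar m ω < 0} := by
  have : {ω | ∀ m ≤ k, Zbar m ω < 0} = ⋂ m ∈ Set.Iic k, Zbar m ⁻¹' Set.Iio 0 := by
    ext ω; simp [Set.mem_iInter]
  rw [this]
  exact MeasurableSet.biInter (Set.to_countable _) (fun m hm =>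
    (Zbar_meas_filt hadapted hZbar0 hZbarS hm) measurableSet_Iio)

end Stopped

section StoppedIntegral

variable {Zbar : ℕ → Ω → ℝ} {ℱ : Filtration ℕ m0}

lemma stopped_integral (ha : 0 < a) (hb : b < 0) (hp0 : 0 ≤ p) (hp1 : p ≤ 1)
    (hadapted : ∀ k : ℕ, Measurable[ℱ (k + 1)] (W (k + 1)))
    (hvalues : ∀ k : ℕ, ∀ ω, W (k + 1) ω = a ∨ W (k + 1) ω = b)
    (hcond : ∀ k : ℕ,
      μ[Set.indicator {ω | W (k + 1) ω = a} (fun _ => (1 : ℝ)) | ℱ k] =ᵐ[μ] fun _ => p)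
    (hZbar0 : ∀ ω, Zbar 0 ω = b)
    (hZbarS : ∀ k ω, Zbar (k + 1) ω = Zbar k ω + W (k + 1) ω)
    (n : ℕ) :
    Integrable (stopped Zbar b n) μ ∧
    ∫ ω, stopped Zbar b n ω ∂μ
      = b + (p*a + (1-p)*b) * ∑ k ∈ Finset.range n, (μ {ω | ∀ m ≤ k, Zbar m ω < 0}).toReal := by
  induction n with
  | zero =>
      constructor
      · exact integrable_const b
      · simp [stopped]
  | succ n ih =>
      obtain ⟨ihInt, ihEq⟩ := ih
      set G := {ω | ∀ m ≤ n, Zbar m ω < 0} with hGdef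
      have hGf : MeasurableSet[ℱ n] G := Gset_meas_filt hadapted hZbar0 hZbarS n
      have hA : MeasurableSet (G ∩ {ω | W (n+1) ω = a}) :=
        (ℱ.le n _ hGf).inter (ℱ.le (n+1) _ (measA hadapted n a))
      have hB : MeasurableSet (G ∩ {ω | W (n+1) ω = b}) :=
        (ℱ.le n _ hGf).inter (ℱ.le (n+1) _ (measA hadapted n b))
      have intA : Integrable ((G ∩ {ω | W (n+1) ω = a}).indicator (fun _ => (1:ℝ))) μ :=
        (integrable_const (1:ℝ)).indicator hA
      have intB : Integrable ((G ∩ {ω | W (n+1) ω = b}).indicator (fun _ => (1:ℝ))) μ :=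
        (integrable_const (1:ℝ)).indicator hB
      have hdec := indicator_W_decomp (W := W) ha hb hvalues n G
      have hrw : stopped Zbar b (n+1) = fun ω => stopped Zbar b n ω
          + (a * Set.indicator (G ∩ {ω | W (n+1) ω = a}) (fun _ => (1:ℝ)) ω
            + b * Set.indicator (G ∩ {ω | W (n+1) ω = b}) (fun _ => (1:ℝ)) ω) := by
        rw [stopped_succ_eq hZbar0 hZbarS n]
        funext ω
        rw [congrFun hdec ω]
      have intInd : Integrable (fun ω =>
          a * Set.indicator (G ∩ {ω | W (n+1) ω = a}) (fun _ => (1:ℝ)) ω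
          + b * Set.indicator (G ∩ {ω | W (n+1) ω = b}) (fun _ => (1:ℝ)) ω) μ :=
        (intA.const_mul a).add (intB.const_mul b)
      constructor
      · rw [hrw]
        exact ihInt.add intInd
      · rw [hrw, integral_add ihInt intInd,
          integral_add (intA.const_mul a) (intB.const_mul b),
          integral_const_mul, integral_const_mul,
          integral_indicator_const (1:ℝ) hA, integral_indicator_const (1:ℝ) hB,
          measureReal_def, measureReal_def,
          meas_inter_a hp0 hadapted hcond n hGf,
          meas_inter_b ha hb hp0 hp1 hadapted hvalues hcond n hGf,
          ihEq, Finset.sum_range_succ]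
        rw [ENNReal.toReal_mul, ENNReal.toReal_mul, ENNReal.toReal_ofReal hp0,
          ENNReal.toReal_ofReal (by linarith : (0:ℝ) ≤ 1 - p)]
        simp only [smul_eq_mul, mul_one]
        ring

lemma tsum_G_le (ha : 0 < a) (hb : b < 0) (hp0 : 0 ≤ p) (hp1 : p ≤ 1)
    (hdrift : 0 < p * (a - b) + b)
    (hadapted : ∀ k : ℕ, Measurable[ℱ (k + 1)] (W (k + 1)))
    (hvalues : ∀ k : ℕ, ∀ ω, W (k + 1) ω = a ∨ W (k + 1) ω = b)
    (hcond : ∀ k : ℕ,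
      μ[Set.indicator {ω | W (k + 1) ω = a} (fun _ => (1 : ℝ)) | ℱ k] =ᵐ[μ] fun _ => p)
    (hZbar0 : ∀ ω, Zbar 0 ω = b)
    (hZbarS : ∀ k ω, Zbar (k + 1) ω = Zbar k ω + W (k + 1) ω) :
    ∑' k : ℕ, μ {ω | ∀ m ≤ k, Zbar m ω < 0}
      ≤ ENNReal.ofReal ((a-b)/(p*(a-b)+b)) := by
  have hsum : ∀ n : ℕ,
      ∑ k ∈ Finset.range n, (μ {ω | ∀ m ≤ k, Zbar m ω < 0}).toReal ≤ (a-b)/(p*(a-b)+b) := by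
    intro n
    obtain ⟨hInt, hEq⟩ := stopped_integral ha hb hp0 hp1 hadapted hvalues hcond hZbar0 hZbarS n
    have hle : ∫ ω, stopped Zbar b n ω ∂μ ≤ a := by
      calc ∫ ω, stopped Zbar b n ω ∂μ ≤ ∫ _, a ∂μ :=
            integral_mono hInt (integrable_const a) (stopped_le ha hb hvalues hZbarS n)
        _ = a := by simp
    rw [hEq] at hle
    have hv : p*a + (1-p)*b = p*(a-b)+b := by ring
    rw [hv] at hle
    refine (le_div_iff₀ hdrift).mpr ?_
    have hc := mul_comm (p*(a-b)+b) (∑ k ∈ Finset.range n, (μ {ω | ∀ m ≤ k, Zbar m ω < 0}).toReal)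
    linarith
  calc ∑' k : ℕ, μ {ω | ∀ m ≤ k, Zbar m ω < 0}
      = ⨆ s : Finset ℕ, ∑ k ∈ s, μ {ω | ∀ m ≤ k, Zbar m ω < 0} := ENNReal.tsum_eq_iSup_sum
    _ ≤ ENNReal.ofReal ((a-b)/(p*(a-b)+b)) := by
      refine iSup_le (fun s => ?_)
      obtain ⟨n, hn⟩ := s.exists_nat_subset_range
      calc ∑ k ∈ s, μ {ω | ∀ m ≤ k, Zbar m ω < 0}
          ≤ ∑ k ∈ Finset.range n, μ {ω | ∀ m ≤ k, Zbar m ω < 0} :=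
            Finset.sum_le_sum_of_subset hn
        _ = ENNReal.ofReal (∑ k ∈ Finset.range n, (μ {ω | ∀ m ≤ k, Zbar m ω < 0}).toReal) := by
            rw [ENNReal.ofReal_sum_of_nonneg (fun i _ => ENNReal.toReal_nonneg)]
            exact Finset.sum_congr rfl
              (fun k _ => (ENNReal.ofReal_toReal (measure_ne_top μ _)).symm)
        _ ≤ _ := ENNReal.ofReal_le_ofReal (hsum n)

end StoppedIntegral

lemma zb_shift_meas (ha : 0 < a) (hb : b < 0)
    (hvalues : ∀ k : ℕ, ∀ ω, W (k + 1) ω = a ∨ W (k + 1) ω = b)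
    (hW : ∀ k : ℕ, Measurable (W (k+1))) (m : ℕ) :
    Measurable (fun ω => zb a b (fun k => decide (W (k+2) ω = a)) m) := by
  induction m with
  | zero =>
      simp only [zb, Finset.range_zero, Finset.sum_empty, add_zero]
      exact measurable_const
  | succ m ih =>
      have : (fun ω => zb a b (fun k => decide (W (k+2) ω = a)) (m+1))
          = fun ω => zb a b (fun k => decide (W (k+2) ω = a)) m + W (m+2) ω := by
        funext ω
        rw [zb_succ]
        congr 1
        exact bitval ha hb hvalues (m+1) ω
      rw [this]
      exact ih.add (hW (m+1))

end Stmt7Aux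

theorem stmt_7 {Ω : Type*} {m0 : MeasurableSpace Ω} (μ : Measure Ω)
    [IsProbabilityMeasure μ] (ℱ : Filtration ℕ m0)
    (W : ℕ → Ω → ℝ) (a b p : ℝ) (ha : 0 < a) (hb : b < 0)
    (hp0 : 0 ≤ p) (hp1 : p ≤ 1)
    (hdrift : 0 < p * (a - b) + b)
    (hadapted : ∀ k : ℕ, Measurable[ℱ (k + 1)] (W (k + 1)))
    (hvalues : ∀ k : ℕ, ∀ ω, W (k + 1) ω = a ∨ W (k + 1) ω = b)
    (hcond : ∀ k : ℕ,
      μ[Set.indicator {ω | W (k + 1) ω = a} (fun _ => (1 : ℝ)) | ℱ k]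
        =ᵐ[μ] fun _ => p)
    (L : ℝ)  -- the ceiling log (Δ_ε / Δ_0)
    (Z : ℕ → Ω → ℝ)
    (hZ0 : ∀ ω, Z 0 ω = L)
    (hZS : ∀ k ω, Z (k + 1) ω = min (Z k ω + W (k + 1) ω) L)
    (Zbar : ℕ → Ω → ℝ)
    (hZbar0 : ∀ ω, Zbar 0 ω = b)
    (hZbarS : ∀ k ω, Zbar (k + 1) ω = Zbar k ω + W (k + 1) ω)
    (τbar : Ω → ℕ∞)
    (hτbar : ∀ ω, τbar ω = sInf {n : ℕ∞ | ∃ m : ℕ, (m : ℕ∞) = n ∧ 0 ≤ Zbar m ω})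
    (τ₁ : Ω → ℕ∞)
    (hτ₁ : ∀ ω, τ₁ ω = sInf {n : ℕ∞ | ∃ m : ℕ, (m : ℕ∞) = n ∧ 0 < m ∧ Z m ω = L}) :
    (∫⁻ ω, (τ₁ ω : ℝ≥0∞) ∂μ
        = ENNReal.ofReal p + (1 + ∫⁻ ω, (τbar ω : ℝ≥0∞) ∂μ) * ENNReal.ofReal (1 - p)) ∧
      ∫⁻ ω, (τ₁ ω : ℝ≥0∞) ∂μ ≤
        ENNReal.ofReal (p + (1 - p) * (1 + (a - b) / (p * (a - b) + b))) := by
  open Stmt7Aux in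
  have hW : ∀ k : ℕ, Measurable (W (k+1)) :=
    fun k => (hadapted k).mono (ℱ.le (k+1)) le_rfl
  -- the tail events of τbar
  have htail_bar : ∀ n : ℕ, {ω | ((n:ℕ):ℕ∞) < τbar ω} = {ω | ∀ m ≤ n, Zbar m ω < 0} :=
    fun n => Set.ext (fun ω => Stmt7Aux.tau_bar_tail hτbar n ω)
  have hGmeas : ∀ n : ℕ, MeasurableSet {ω | ∀ m ≤ n, Zbar m ω < 0} :=
    fun n => ℱ.le n _ (Stmt7Aux.Gset_meas_filt hadapted hZbar0 hZbarS n)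
  have htail_bar_meas : ∀ n : ℕ, MeasurableSet {ω | ((n:ℕ):ℕ∞) < τbar ω} := by
    intro n; rw [htail_bar n]; exact hGmeas n
  -- lintegral of τbar
  have hIbar : ∫⁻ ω, (τbar ω : ℝ≥0∞) ∂μ = ∑' n : ℕ, μ {ω | ∀ m ≤ n, Zbar m ω < 0} := by
    rw [Stmt7Aux.lintegral_enat τbar htail_bar_meas]
    exact tsum_congr (fun n => by rw [htail_bar n])
  -- the Q predicates
  set Q : ℕ → (ℕ → Bool) → Prop := fun n f => ∀ m ≤ n, zb a b f m < 0 with hQdef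
  have hQmono : ∀ n : ℕ, ∀ f g : ℕ → Bool, (∀ k < n, f k = g k) → Q n f → Q n g := by
    intro n f g hfg hQf m hm
    rw [← Stmt7Aux.zb_congr (a := a) (b := b) hfg hm]
    exact hQf m hm
  -- tail events of τ₁
  have htail1 : ∀ n : ℕ, {ω | ((n+1:ℕ):ℕ∞) < τ₁ ω}
      = {ω | W 1 ω = b ∧ Q n (fun k => decide (W (k+2) ω = a))} :=
    fun n => Set.ext (fun ω => Stmt7Aux.tau1_tail ha hb hvalues hZ0 hZS hτ₁ n ω)
  have hbarQ : ∀ n : ℕ, {ω | Q n (fun k => decide (W (k+1) ω = a))}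
      = {ω | ∀ m ≤ n, Zbar m ω < 0} := by
    intro n
    ext ω
    simp only [Set.mem_setOf_eq, hQdef]
    constructor
    · intro h m hm
      rw [Stmt7Aux.Zbar_eq_zb ha hb hvalues hZbar0 hZbarS m ω]
      exact h m hm
    · intro h m hm
      rw [← Stmt7Aux.Zbar_eq_zb ha hb hvalues hZbar0 hZbarS m ω]
      exact h m hm
  have hmeasure1 : ∀ n : ℕ, μ {ω | ((n+1:ℕ):ℕ∞) < τ₁ ω}
      = ENNReal.ofReal (1-p) * μ {ω | ∀ m ≤ n, Zbar m ω < 0} := by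
    intro n
    rw [htail1 n,
      Stmt7Aux.measure_event_zero ha hb hp0 hp1 hadapted hvalues hcond n (Q n) (hQmono n),
      hbarQ n]
  have htail1_meas : ∀ n : ℕ, MeasurableSet {ω | ((n:ℕ):ℕ∞) < τ₁ ω} := by
    intro n
    cases n with
    | zero =>
        have : {ω | ((0:ℕ):ℕ∞) < τ₁ ω} = Set.univ := by
          ext ω
          simpa using Stmt7Aux.tau1_pos hτ₁ ω
        rw [this]; exact MeasurableSet.univ
    | succ n =>
        rw [htail1 n]
        have : {ω | W 1 ω = b ∧ Q n (fun k => decide (W (k+2) ω = a))}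
            = {ω | W 1 ω = b} ∩ ⋂ m ∈ Set.Iic n,
                {ω | zb a b (fun k => decide (W (k+2) ω = a)) m < 0} := by
          ext ω; simp [hQdef, Set.mem_iInter]
        rw [this]
        refine ((hW 0) (measurableSet_singleton b)).inter ?_
        exact MeasurableSet.biInter (Set.to_countable _) (fun m _ =>
          (Stmt7Aux.zb_shift_meas ha hb hvalues hW m) measurableSet_Iio)
  have htau1_zero : μ {ω | ((0:ℕ):ℕ∞) < τ₁ ω} = 1 := by
    have : {ω | ((0:ℕ):ℕ∞) < τ₁ ω} = Set.univ := by
      ext ω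
      simpa using Stmt7Aux.tau1_pos hτ₁ ω
    rw [this, measure_univ]
  -- lintegral of τ₁
  have hI1 : ∫⁻ ω, (τ₁ ω : ℝ≥0∞) ∂μ
      = 1 + ENNReal.ofReal (1-p) * ∫⁻ ω, (τbar ω : ℝ≥0∞) ∂μ := by
    rw [Stmt7Aux.lintegral_enat τ₁ htail1_meas,
      tsum_eq_zero_add' ENNReal.summable, htau1_zero, hIbar]
    congr 1
    rw [← ENNReal.tsum_mul_left]
    exact tsum_congr (fun n => hmeasure1 n)
  have hone : ENNReal.ofReal p + ENNReal.ofReal (1-p) = 1 := by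
    rw [← ENNReal.ofReal_add hp0 (by linarith)]
    norm_num
  constructor
  · rw [hI1, add_mul, one_mul, ← add_assoc, hone, mul_comm]
  · have hTbar : ∫⁻ ω, (τbar ω : ℝ≥0∞) ∂μ ≤ ENNReal.ofReal ((a-b)/(p*(a-b)+b)) := by
      rw [hIbar]
      exact Stmt7Aux.tsum_G_le ha hb hp0 hp1 hdrift hadapted hvalues hcond hZbar0 hZbarS
    have hx : (0:ℝ) ≤ (a-b)/(p*(a-b)+b) := div_nonneg (by linarith) (le_of_lt hdrift)
    calc ∫⁻ ω, (τ₁ ω : ℝ≥0∞) ∂μ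
        = 1 + ENNReal.ofReal (1-p) * ∫⁻ ω, (τbar ω : ℝ≥0∞) ∂μ := hI1
      _ ≤ 1 + ENNReal.ofReal (1-p) * ENNReal.ofReal ((a-b)/(p*(a-b)+b)) :=
          add_le_add_right (mul_le_mul_right hTbar _) 1
      _ = ENNReal.ofReal (1 + (1-p) * ((a-b)/(p*(a-b)+b))) := by
          rw [← ENNReal.ofReal_mul (by linarith : (0:ℝ) ≤ 1-p)]
          rw [← ENNReal.ofReal_one, ← ENNReal.ofReal_add (by norm_num) (mul_nonneg (by linarith) hx)]
      _ = ENNReal.ofReal (p + (1 - p) * (1 + (a - b) / (p * (a - b) + b))) := by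
          congr 1
          ring
end

section
/- Let Y¹, Y², ... be i.i.d. real random variables with Y not almost surely constant equal to 0, and let (a_l), (b_l) be bounded real sequences with a_l ≥ b_l for all l. Define m = inf{l ≥ 1 : Σ_{i=1}^{l} Yⁱ ≥ a_l or Σ_{i=1}^{l} Yⁱ ≤ b_l}. Then P(m < ∞) = 1. -/
open MeasureTheory ProbabilityTheory
open scoped ENNReal ENat

/-- Key lemma: if there is `c > 0` with `μ {c ≤ Y 0} > 0`, then the walk exits the band a.s. -/
lemma key_stmt_12 {Ω : Type*} {m0 : MeasurableSpace Ω} (μ : Measure Ω)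
    [IsProbabilityMeasure μ]
    (Y : ℕ → Ω → ℝ) (hmeas : ∀ i, Measurable (Y i))
    (hindep : iIndepFun Y μ)
    (hident : ∀ i, IdentDistrib (Y i) (Y 0) μ μ)
    (c : ℝ) (hc : 0 < c) (hp : 0 < μ {ω | c ≤ Y 0 ω})
    (a b : ℕ → ℝ)
    (Ma Mb : ℝ) (hbdda : ∀ l, |a l| ≤ Ma) (hbddb : ∀ l, |b l| ≤ Mb)
    (m : Ω → ℕ∞)
    (hm : ∀ ω, m ω = sInf {l : ℕ∞ | ∃ k : ℕ, (k : ℕ∞) = l ∧ 1 ≤ k ∧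
      (a k ≤ ∑ i ∈ Finset.range k, Y i ω ∨ ∑ i ∈ Finset.range k, Y i ω ≤ b k)}) :
    μ {ω | m ω < ⊤} = 1 := by
  classical
  set n : ℕ := ⌈(Ma + Mb) / c⌉₊ + 1 with hn
  have hn1 : 1 ≤ n := Nat.le_add_left 1 _
  have hnc : Ma + Mb < (n : ℝ) * c := by
    have h1 : (Ma + Mb) / c < (n : ℝ) := by
      refine lt_of_le_of_lt (Nat.le_ceil _) ?_
      exact_mod_cast Nat.lt_succ_self _
    have := (div_lt_iff₀ hc).mp h1
    linarith
  set B : ℕ → Set Ω := fun i => Y i ⁻¹' Set.Ici c with hB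
  set t : ℕ → Finset ℕ := fun j => Finset.Ico (j * n) ((j + 1) * n) with ht
  set A : ℕ → Set Ω := fun j => ⋂ i ∈ t j, B i with hA
  have hBmeas : ∀ i, MeasurableSet (B i) := fun i => (hmeas i) measurableSet_Ici
  have hAmeas : ∀ j, MeasurableSet (A j) := fun j =>
    Finset.measurableSet_biInter _ (fun i _ => hBmeas i)
  have hcomap : ∀ i, MeasurableSet[(inferInstance : MeasurableSpace ℝ).comap (Y i)] (B i) :=
    fun i => ⟨Set.Ici c, measurableSet_Ici, rfl⟩
  have hprod : ∀ S : Finset ℕ, μ (⋂ i ∈ S, B i) = ∏ i ∈ S, μ (B i) := by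
    intro S
    exact hindep.meas_biInter (fun i _ => hcomap i)
  have hBp : ∀ i, μ (B i) = μ (B 0) := by
    intro i
    exact (hident i).measure_mem_eq measurableSet_Ici
  have hcard : ∀ j, (t j).card = n := by
    intro j
    simp only [ht, Nat.card_Ico]
    have : (j + 1) * n = j * n + n := by ring
    omega
  have hAval : ∀ j, μ (A j) = μ (B 0) ^ n := by
    intro j
    rw [hA, hprod]
    rw [Finset.prod_congr rfl (fun i _ => hBp i), Finset.prod_const, hcard]
  have hdisj : ∀ i j : ℕ, i ≠ j → Disjoint (t i) (t j) := by
    intro i j hij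
    rw [Finset.disjoint_left]
    intro x hxi hxj
    simp only [ht, Finset.mem_Ico] at hxi hxj
    rcases lt_or_gt_of_ne hij with h | h
    · have : (i + 1) * n ≤ j * n := Nat.mul_le_mul_right n h
      omega
    · have : (j + 1) * n ≤ i * n := Nat.mul_le_mul_right n h
      omega
  have hindepA : iIndepSet A μ := by
    rw [iIndepSet_iff_meas_biInter hAmeas]
    intro S
    have h1 : (⋂ j ∈ S, A j) = ⋂ i ∈ S.biUnion t, B i := by
      rw [Finset.set_biInter_biUnion]
    rw [h1, hprod, Finset.prod_biUnion]
    · exact Finset.prod_congr rfl (fun j _ => (hprod (t j)).symm)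
    · intro i _ j _ hij
      exact hdisj i j hij
  have hp0 : μ (B 0) ≠ 0 := by
    have : {ω | c ≤ Y 0 ω} = B 0 := rfl
    rw [← this]
    exact hp.ne'
  have htsum : (∑' j, μ (A j)) = ∞ := by
    simp only [hAval]
    exact ENNReal.tsum_const_eq_top_of_ne_zero (pow_ne_zero n hp0)
  have hBC : μ (Filter.limsup A Filter.atTop) = 1 :=
    measure_limsup_eq_one hAmeas hindepA htsum
  refine le_antisymm prob_le_one ?_
  rw [← hBC]
  apply measure_mono
  intro ω hω
  rw [Filter.limsup_eq_iInf_iSup_of_nat] at hω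
  simp only [Set.iInf_eq_iInter, Set.iSup_eq_iUnion, Set.mem_iInter, Set.mem_iUnion] at hω
  obtain ⟨j, hj1, hωA⟩ := hω 1
  have hωB : ∀ i ∈ t j, c ≤ Y i ω := by
    intro i hi
    have := Set.mem_iInter₂.mp hωA i hi
    exact this
  set S : ℕ → ℝ := fun k => ∑ i ∈ Finset.range k, Y i ω with hS
  have hkey : ∃ k : ℕ, 1 ≤ k ∧ (a k ≤ S k ∨ S k ≤ b k) := by
    by_cases h0 : a (j * n) ≤ S (j * n) ∨ S (j * n) ≤ b (j * n)
    · exact ⟨j * n, Nat.one_le_iff_ne_zero.mpr (by positivity), h0⟩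
    · push_neg at h0
      obtain ⟨h0a, h0b⟩ := h0
      refine ⟨(j + 1) * n, Nat.one_le_iff_ne_zero.mpr (by positivity), Or.inl ?_⟩
      have hsplit : S (j * n) + ∑ i ∈ t j, Y i ω = S ((j + 1) * n) := by
        simp only [hS, ht, Finset.range_eq_Ico]
        exact Finset.sum_Ico_consecutive _ (Nat.zero_le _) (Nat.mul_le_mul_right n (Nat.le_succ j))
      have hblock : (n : ℝ) * c ≤ ∑ i ∈ t j, Y i ω := by
        have := Finset.card_nsmul_le_sum (t j) (fun i => Y i ω) c hωB
        rwa [hcard, nsmul_eq_mul] at this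
      have hb1 : -Mb ≤ b (j * n) := by
        have := hbddb (j * n)
        have := neg_abs_le (b (j * n))
        linarith
      have ha1 : a ((j + 1) * n) ≤ Ma := le_trans (le_abs_self _) (hbdda _)
      have : Ma < S ((j + 1) * n) := by
        rw [← hsplit]
        linarith
      linarith
  obtain ⟨k, hk1, hcond⟩ := hkey
  show m ω < ⊤
  rw [hm ω]
  have hmem : (k : ℕ∞) ∈ {l : ℕ∞ | ∃ k' : ℕ, (k' : ℕ∞) = l ∧ 1 ≤ k' ∧
      (a k' ≤ ∑ i ∈ Finset.range k', Y i ω ∨ ∑ i ∈ Finset.range k', Y i ω ≤ b k')} :=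
    ⟨k, rfl, hk1, hcond⟩
  exact lt_of_le_of_lt (sInf_le hmem) (by simp)

theorem stmt_12 {Ω : Type*} {m0 : MeasurableSpace Ω} (μ : Measure Ω)
    [IsProbabilityMeasure μ]
    (Y : ℕ → Ω → ℝ) (hmeas : ∀ i, Measurable (Y i))
    (hindep : iIndepFun Y μ)
    (hident : ∀ i, IdentDistrib (Y i) (Y 0) μ μ)
    (hnondeg : μ {ω | Y 0 ω = 0} < 1)
    (a b : ℕ → ℝ) (hab : ∀ l, b l ≤ a l)
    (Ma Mb : ℝ) (hbdda : ∀ l, |a l| ≤ Ma) (hbddb : ∀ l, |b l| ≤ Mb)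
    (m : Ω → ℕ∞)
    (hm : ∀ ω, m ω = sInf {l : ℕ∞ | ∃ k : ℕ, (k : ℕ∞) = l ∧ 1 ≤ k ∧
      (a k ≤ ∑ i ∈ Finset.range k, Y i ω ∨ ∑ i ∈ Finset.range k, Y i ω ≤ b k)}) :
    μ {ω | m ω < ⊤} = 1 := by
  classical
  -- Step 1: find c > 0 with μ {|Y 0| ≥ c} > 0
  have hne : 0 < μ {ω | Y 0 ω ≠ 0} := by
    by_contra h
    push_neg at h
    have h0 : μ {ω | Y 0 ω ≠ 0} = 0 := le_antisymm h (zero_le (a := _))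
    have hsub : (Set.univ : Set Ω) ⊆ {ω | Y 0 ω = 0} ∪ {ω | Y 0 ω ≠ 0} := by
      intro ω _
      by_cases hω : Y 0 ω = 0
      · exact Or.inl hω
      · exact Or.inr hω
    have : (1 : ℝ≥0∞) ≤ μ {ω | Y 0 ω = 0} := by
      calc (1 : ℝ≥0∞) = μ Set.univ := (measure_univ).symm
        _ ≤ μ ({ω | Y 0 ω = 0} ∪ {ω | Y 0 ω ≠ 0}) := measure_mono hsub
        _ ≤ μ {ω | Y 0 ω = 0} + μ {ω | Y 0 ω ≠ 0} := measure_union_le _ _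
        _ = μ {ω | Y 0 ω = 0} := by rw [h0, add_zero]
    exact absurd hnondeg (not_lt.mpr this)
  have hsub2 : {ω | Y 0 ω ≠ 0} ⊆ ⋃ k : ℕ, {ω | 1 / ((k : ℝ) + 1) ≤ |Y 0 ω|} := by
    intro ω hω
    have habs : 0 < |Y 0 ω| := abs_pos.mpr hω
    obtain ⟨k, hk⟩ := exists_nat_one_div_lt habs
    exact Set.mem_iUnion.mpr ⟨k, le_of_lt hk⟩
  have hexc : ∃ k : ℕ, 0 < μ {ω | 1 / ((k : ℝ) + 1) ≤ |Y 0 ω|} := by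
    by_contra h
    push_neg at h
    have h0 : ∀ k : ℕ, μ {ω | 1 / ((k : ℝ) + 1) ≤ |Y 0 ω|} = 0 :=
      fun k => le_antisymm (h k) (zero_le (a := _))
    have : μ (⋃ k : ℕ, {ω | 1 / ((k : ℝ) + 1) ≤ |Y 0 ω|}) = 0 :=
      measure_iUnion_null h0
    exact absurd (lt_of_lt_of_le hne (measure_mono hsub2)) (by rw [this]; exact lt_irrefl 0)
  obtain ⟨k₀, hk₀⟩ := hexc
  set c : ℝ := 1 / ((k₀ : ℝ) + 1) with hcdef
  have hc : 0 < c := by positivity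
  have hsplit : {ω | c ≤ |Y 0 ω|} ⊆ {ω | c ≤ Y 0 ω} ∪ {ω | Y 0 ω ≤ -c} := by
    intro ω hω
    have hω' : c ≤ |Y 0 ω| := hω
    rcases le_abs.mp hω' with h | h
    · exact Or.inl h
    · exact Or.inr (show Y 0 ω ≤ -c by linarith)
  have hcase : 0 < μ {ω | c ≤ Y 0 ω} ∨ 0 < μ {ω | Y 0 ω ≤ -c} := by
    by_contra h
    push_neg at h
    obtain ⟨h1, h2⟩ := h
    have h1' : μ {ω | c ≤ Y 0 ω} = 0 := le_antisymm h1 (zero_le (a := _))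
    have h2' : μ {ω | Y 0 ω ≤ -c} = 0 := le_antisymm h2 (zero_le (a := _))
    have : μ {ω | c ≤ |Y 0 ω|} = 0 := by
      refine le_antisymm ?_ (zero_le (a := _))
      calc μ {ω | c ≤ |Y 0 ω|} ≤ μ ({ω | c ≤ Y 0 ω} ∪ {ω | Y 0 ω ≤ -c}) := measure_mono hsplit
        _ ≤ μ {ω | c ≤ Y 0 ω} + μ {ω | Y 0 ω ≤ -c} := measure_union_le _ _
        _ = 0 := by rw [h1', h2', add_zero]
    rw [this] at hk₀
    exact lt_irrefl 0 hk₀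
  rcases hcase with hpos | hneg
  · exact key_stmt_12 μ Y hmeas hindep hident c hc hpos a b Ma Mb hbdda hbddb m hm
  · -- apply the key lemma to -Y, with bands swapped and negated
    have hmeas' : ∀ i, Measurable (fun ω => -Y i ω) := fun i => (hmeas i).neg
    have hindep' : iIndepFun
        (fun i ω => -Y i ω) μ :=
      hindep.comp (fun _ => Neg.neg) (fun _ => measurable_neg)
    have hident' : ∀ i, IdentDistrib (fun ω => -Y i ω) (fun ω => -Y 0 ω) μ μ :=
      fun i => (hident i).comp measurable_neg
    have hpos' : 0 < μ {ω | c ≤ -Y 0 ω} := by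
      have : {ω | Y 0 ω ≤ -c} = {ω | c ≤ -Y 0 ω} := by
        ext ω
        simp only [Set.mem_setOf_eq]
        constructor <;> intro h <;> linarith
      rwa [this] at hneg
    have hbdda' : ∀ l, |(-b l)| ≤ Mb := by intro l; rw [abs_neg]; exact hbddb l
    have hbddb' : ∀ l, |(-a l)| ≤ Ma := by intro l; rw [abs_neg]; exact hbdda l
    have hm' : ∀ ω, m ω = sInf {l : ℕ∞ | ∃ k : ℕ, (k : ℕ∞) = l ∧ 1 ≤ k ∧
        ((-b k) ≤ ∑ i ∈ Finset.range k, -Y i ω ∨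
          ∑ i ∈ Finset.range k, -Y i ω ≤ (-a k))} := by
      intro ω
      rw [hm ω]
      congr 1
      ext l
      simp only [Set.mem_setOf_eq]
      constructor
      · rintro ⟨k, hkl, hk1, hcond⟩
        refine ⟨k, hkl, hk1, ?_⟩
        rw [Finset.sum_neg_distrib]
        rcases hcond with h | h
        · exact Or.inr (by linarith)
        · exact Or.inl (by linarith)
      · rintro ⟨k, hkl, hk1, hcond⟩
        refine ⟨k, hkl, hk1, ?_⟩
        rw [Finset.sum_neg_distrib] at hcond
        rcases hcond with h | h
        · exact Or.inr (by linarith)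
        · exact Or.inl (by linarith)
    exact key_stmt_12 μ (fun i ω => -Y i ω) hmeas' hindep' hident' c hc hpos'
      (fun l => -b l) (fun l => -a l) Mb Ma hbdda' hbddb' m hm'
end
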